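/- arXiv:2512.08119 — 2 statements merged into one kernel-verified Lean document; each statement's English description precedes it below -/
import Mathlib

section
/- Let a ∈ ℂ, let φ ∈ ℝ, and let n ∈ ℤ≥0. Then for all x ∈ ℂ: (a+ix)(a−ix) · [ 2 P_{n+2}^{(a)}(x;φ) − P_{n+2}^{(a)}(x−i;φ) − P_{n+2}^{(a)}(x+i;φ) ] = (n+1)(n+2) P_{n+2}^{(a)}(x;φ) − 2 cos φ · (n+1)(2a+n+1) P_{n+1}^{(a)}(x;φ) + (2a+n)(2a+n+1) P_n^{(a)}(x;φ). -/
open Complex Finset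

/-- Rising Pochhammer symbol `(x)_m = x (x+1) ⋯ (x+m-1)`. -/
noncomputable def poch (x : ℂ) (m : ℕ) : ℂ := ∏ j ∈ Finset.range m, (x + j)

/-- Meixner–Pollaczek polynomial `P_n^{(a)}(x;φ)` as a function of `x ∈ ℂ`. -/
noncomputable def mpPoly (a : ℂ) (φ : ℝ) (n : ℕ) (x : ℂ) : ℂ :=
  Complex.exp (n * Complex.I * φ) / (n.factorial : ℂ) *
    ∑ k ∈ Finset.range (n + 1),
      poch (-(n : ℂ)) k * poch (a + Complex.I * x) k * poch (2 * a + k) (n - k) /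
        (k.factorial : ℂ) * (1 - Complex.exp (-(2 * Complex.I * φ))) ^ k

/-!
Write `u = a + ix` and `z = 1 - e^{-2iφ}`, so that
`P_n^{(a)}(x;φ) = e^{inφ} ∑ₖ cₙ(k) zᵏ (u)ₖ` with `cₙ(k) = mpCoeff a n k`.
On the Pochhammer basis the operator `u (2a - u) (2 - shift₊ - shift₋)` acts through
`u (2 (u)ₖ₊₁ - (u+1)ₖ₊₁ - (u-1)ₖ₊₁) = -k(k+1) (u)ₖ` and
`(2a - u)(u)ₖ = (2a + k)(u)ₖ - (u)ₖ₊₁`, so after an index shift both sides are expansions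
in `(u)ₖ`. Their coefficients agree because of the two first-order relations
`(n+1-k) cₙ₊₁(k) = (2a+n) cₙ(k)` and `(k+1)(2a+k) cₙ₊₁(k+1) = -(2a+n) cₙ(k)`, once the
prefactors are matched by `2 cos φ e^{i(n+1)φ} = e^{i(n+2)φ} (2 - z)` and
`e^{inφ} = e^{i(n+2)φ} (1 - z)`.
-/

theorem Finset.sum_range_shift {M : Type*} [AddCommMonoid M] {f : ℕ → M} {N : ℕ}
    (h0 : f 0 = 0) (hN : f N = 0) : ∑ k ∈ range N, f (k + 1) = ∑ k ∈ range N, f k := by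
  rw [← add_zero (∑ k ∈ range N, f (k + 1)), ← h0, ← sum_range_succ', sum_range_succ, hN,
    add_zero]

section Pochhammer

open Nat

theorem poch_zero (x : ℂ) : poch x 0 = 1 := by simp [poch]

theorem poch_succ (x : ℂ) (m : ℕ) : poch x (m + 1) = poch x m * (x + m) := by
  simp [poch, prod_range_succ]

theorem poch_succ_left (x : ℂ) (m : ℕ) : poch x (m + 1) = x * poch (x + 1) m := by
  simp only [poch, prod_range_succ', cast_zero, add_zero, cast_succ, mul_comm, add_comm,
    add_left_comm]

theorem poch_neg_natCast_mul_factorial (k m : ℕ) :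
    poch (-((k + m : ℕ) : ℂ)) k * m ! = (-1) ^ k * (k + m)! := by
  induction k with
  | zero => simp [poch_zero]
  | succ k ih =>
    rw [poch_succ_left,
      show -(((k + 1 + m : ℕ)) : ℂ) + 1 = -((k + m : ℕ) : ℂ) by push_cast; ring,
      show k + 1 + m = (k + m) + 1 by omega, factorial_succ]
    push_cast at ih ⊢
    linear_combination (-((k : ℂ) + m + 1)) * ih

theorem mul_poch_second_difference (u : ℂ) (k : ℕ) :
    u * (2 * poch u (k + 1) - poch (u + 1) (k + 1) - poch (u - 1) (k + 1))
      = -(k * (k + 1)) * poch u k := by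
  have h₁ := poch_succ_left (u - 1) k
  rw [sub_add_cancel] at h₁
  have h₂ : u * poch (u + 1) (k + 1) = poch u k * (u + k) * (u + k + 1) := by
    rw [← poch_succ_left, poch_succ, poch_succ]; push_cast; ring
  rw [h₁, poch_succ]
  linear_combination -h₂

end Pochhammer

section Coefficients

open Nat

noncomputable def mpCoeff (a : ℂ) (n k : ℕ) : ℂ :=
  poch (-(n : ℂ)) k * poch (2 * a + k) (n - k) / (n ! * k !)

theorem mpCoeff_of_lt (a : ℂ) {n k : ℕ} (h : n < k) : mpCoeff a n k = 0 := by
  rw [mpCoeff, poch, prod_eq_zero (mem_range.mpr h) (by simp), zero_mul, zero_div]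

theorem mpCoeff_self_add (a : ℂ) (k m : ℕ) :
    mpCoeff a (k + m) k = (-1) ^ k * poch (2 * a + k) m / (k ! * m !) := by
  have h := poch_neg_natCast_mul_factorial k m
  rw [mpCoeff, Nat.add_sub_cancel_left]
  field_simp [factorial_ne_zero]
  linear_combination poch (2 * a + k) m * h

theorem mpCoeff_succ (a : ℂ) (n k : ℕ) :
    ((n : ℂ) + 1 - k) * mpCoeff a (n + 1) k = (2 * a + n) * mpCoeff a n k := by
  rcases le_or_gt k n with hkn | hnk
  · obtain ⟨m, rfl⟩ := Nat.exists_eq_add_of_le hkn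
    rw [add_assoc, mpCoeff_self_add, mpCoeff_self_add, poch_succ, factorial_succ]
    push_cast
    field_simp [factorial_ne_zero]
    ring
  · rw [mpCoeff_of_lt a hnk, mul_zero]
    rcases (Nat.succ_le_of_lt hnk).eq_or_lt with rfl | hnk'
    · push_cast; ring
    · rw [mpCoeff_of_lt a hnk', mul_zero]

theorem mpCoeff_succ_succ (a : ℂ) (n k : ℕ) :
    ((k : ℂ) + 1) * (2 * a + k) * mpCoeff a (n + 1) (k + 1) = -(2 * a + n) * mpCoeff a n k := by
  rcases le_or_gt k n with hkn | hnk
  · obtain ⟨m, rfl⟩ := Nat.exists_eq_add_of_le hkn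
    rw [show k + m + 1 = (k + 1) + m by omega, mpCoeff_self_add, mpCoeff_self_add, factorial_succ]
    have h : (2 * a + k) * poch (2 * a + (k + 1)) m = poch (2 * a + k) m * (2 * a + k + m) := by
      rw [← add_assoc, ← poch_succ_left, poch_succ]
    push_cast at h ⊢
    field_simp [factorial_ne_zero]
    linear_combination -(-1) ^ k * h
  · rw [mpCoeff_of_lt a hnk, mpCoeff_of_lt a (by omega), mul_zero, mul_zero]

theorem mpCoeff_difference_relation (a z : ℂ) (n k : ℕ) :
    (k : ℂ) * (k - 1) * mpCoeff a (n + 2) k * z ^ k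
        - (k + 1) * k * (2 * a + k) * mpCoeff a (n + 2) (k + 1) * z ^ (k + 1)
      = ((n + 1) * (n + 2) * mpCoeff a (n + 2) k
          - (n + 1) * (2 * a + n + 1) * (2 - z) * mpCoeff a (n + 1) k
          + (2 * a + n) * (2 * a + n + 1) * (1 - z) * mpCoeff a n k) * z ^ k := by
  have hA := mpCoeff_succ a (n + 1) k
  have hB := mpCoeff_succ a n k
  have hA' := mpCoeff_succ_succ a (n + 1) k
  rw [show n + 1 + 1 = n + 2 from rfl] at hA hA'
  push_cast at hA hA'
  linear_combination z ^ k * ((2 * a + n + 1) * hB - (n + 1 + k) * hA)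
    - z ^ (k + 1) * (k * hA' + (2 * a + n + 1) * hB)

end Coefficients

theorem mul_sum_second_difference (c u : ℂ) (b : ℕ → ℂ) {N : ℕ} (hN : b N = 0) :
    u * (c - u) * (2 * ∑ k ∈ range N, b k * poch u k - ∑ k ∈ range N, b k * poch (u + 1) k
        - ∑ k ∈ range N, b k * poch (u - 1) k)
      = ∑ k ∈ range N,
          ((k : ℂ) * (k - 1) * b k - (k + 1) * k * (c + k) * b (k + 1)) * poch u k := by
  set f : ℕ → ℂ := fun k ↦ b k *
    (u * (c - u) * (2 * poch u k - poch (u + 1) k - poch (u - 1) k) - k * (k - 1) * poch u k)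
  have hf_zero : f 0 = 0 := by simp only [f, poch_zero, Nat.cast_zero]; ring
  have hf_N : f N = 0 := by simp [f, hN]
  have hf_succ (k : ℕ) : f (k + 1) = -((k + 1) * k * (c + k) * b (k + 1)) * poch u k := by
    have h := mul_poch_second_difference u k
    have hs := poch_succ u k
    simp only [f]
    push_cast
    linear_combination (c - u) * b (k + 1) * h - (k + 1) * k * b (k + 1) * hs
  calc _ = ∑ k ∈ range N, ((k : ℂ) * (k - 1) * b k * poch u k + f k) := by
        simp only [mul_sum, ← sum_sub_distrib]
        exact sum_congr rfl fun k _ ↦ by ring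
    _ = ∑ k ∈ range N, ((k : ℂ) * (k - 1) * b k * poch u k + f (k + 1)) := by
        rw [sum_add_distrib, sum_add_distrib, sum_range_shift hf_zero hf_N]
    _ = _ := sum_congr rfl fun k _ ↦ by rw [hf_succ]; ring

theorem sum_mpCoeff_second_difference (a z u : ℂ) (n : ℕ) :
    u * (2 * a - u) * (2 * ∑ k ∈ range (n + 3), mpCoeff a (n + 2) k * z ^ k * poch u k
        - ∑ k ∈ range (n + 3), mpCoeff a (n + 2) k * z ^ k * poch (u + 1) k
        - ∑ k ∈ range (n + 3), mpCoeff a (n + 2) k * z ^ k * poch (u - 1) k)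
      = (n + 1) * (n + 2) * ∑ k ∈ range (n + 3), mpCoeff a (n + 2) k * z ^ k * poch u k
        - (n + 1) * (2 * a + n + 1) * (2 - z) *
            ∑ k ∈ range (n + 3), mpCoeff a (n + 1) k * z ^ k * poch u k
        + (2 * a + n) * (2 * a + n + 1) * (1 - z) *
            ∑ k ∈ range (n + 3), mpCoeff a n k * z ^ k * poch u k := by
  rw [mul_sum_second_difference (2 * a) u (fun k ↦ mpCoeff a (n + 2) k * z ^ k)
    (by rw [mpCoeff_of_lt a (by omega), zero_mul])]
  simp only [mul_sum, ← sum_sub_distrib, ← sum_add_distrib]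
  exact sum_congr rfl fun k _ ↦ by
    linear_combination poch u k * mpCoeff_difference_relation a z n k

theorem mpPoly_eq_sum (a : ℂ) (φ : ℝ) (n : ℕ) (x : ℂ) {N : ℕ} (hN : n < N) :
    mpPoly a φ n x = exp (n * I * φ) *
      ∑ k ∈ range N, mpCoeff a n k * (1 - exp (-(2 * I * φ))) ^ k * poch (a + I * x) k := by
  rw [mpPoly, ← sum_subset (range_subset_range.mpr hN) fun k _ hk ↦ by
    rw [mpCoeff_of_lt a (by simpa using hk)]; ring, mul_sum, mul_sum]
  refine sum_congr rfl fun k _ ↦ ?_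
  rw [mpCoeff]
  ring

theorem two_mul_cos_mul_exp (θ m : ℂ) :
    2 * cos θ * exp ((m + 1) * I * θ) = exp ((m + 2) * I * θ) * (1 + exp (-(2 * I * θ))) := by
  rw [two_cos, add_mul, mul_add, ← exp_add, ← exp_add, ← exp_add]
  ring_nf

/-- The difference relation (Theorem `thm:sabunrel` of the paper) for the
Meixner–Pollaczek polynomials. -/
theorem meixner_pollaczek_difference_relation
    (a : ℂ) (φ : ℝ) (n : ℕ) (x : ℂ) :
    (a + Complex.I * x) * (a - Complex.I * x) *
      (2 * mpPoly a φ (n + 2) x - mpPoly a φ (n + 2) (x - Complex.I)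
        - mpPoly a φ (n + 2) (x + Complex.I))
    = ((n : ℂ) + 1) * ((n : ℂ) + 2) * mpPoly a φ (n + 2) x
      - 2 * (Real.cos φ : ℂ) * ((n : ℂ) + 1) * (2 * a + n + 1) * mpPoly a φ (n + 1) x
      + (2 * a + n) * (2 * a + n + 1) * mpPoly a φ n x := by
  have hP (m : ℕ) (hm : m < n + 3) (y : ℂ) := mpPoly_eq_sum a φ m y hm
  have hminus : a + I * (x - I) = a + I * x + 1 := by linear_combination -I_mul_I
  have hplus : a + I * (x + I) = a + I * x - 1 := by linear_combination I_mul_I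
  rw [hP (n + 2) (by omega) x, hP (n + 2) (by omega) (x - I), hP (n + 2) (by omega) (x + I),
    hP (n + 1) (by omega) x, hP n (by omega) x, hminus, hplus]
  have hcos : 2 * cos φ * exp ((n + 1) * I * φ)
      = exp ((n + 2) * I * φ) * (2 - (1 - exp (-(2 * I * φ)))) := by
    rw [two_mul_cos_mul_exp]; ring
  have hexp : exp (n * I * φ) = exp ((n + 2) * I * φ) * (1 - (1 - exp (-(2 * I * φ)))) := by
    rw [sub_sub_cancel, ← exp_add]; ring_nf
  push_cast
  set z := 1 - exp (-(2 * I * φ))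
  set u := a + I * x
  linear_combination exp ((n + 2) * I * φ) * sum_mpCoeff_second_difference a z u n
    + (n + 1) * (2 * a + n + 1) *
        (∑ k ∈ range (n + 3), mpCoeff a (n + 1) k * z ^ k * poch u k) * hcos
    - (2 * a + n) * (2 * a + n + 1) *
        (∑ k ∈ range (n + 3), mpCoeff a n k * z ^ k * poch u k) * hexp
end

section
/- Let q ∈ (0,1), let a ∈ ℂ be nonzero, and let n ∈ ℤ≥0. Then for all x ∈ ℂ: (1−a e^{ix})(1−a e^{−ix}) · H_n(cos x; qa | q) = −a · H_{n+1}(cos x; a|q) + H_n(cos x; a|q). -/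
/-!
Write `u = a e^{ix}`, `v = a e^{-ix}` and let `T_n(u, v; k)` be the `k`-th term of the sum defining
`a^n H_n`. Peeling one factor off each Pochhammer symbol gives
`(u;q)_{k+1} = (1 - u) (qu;q)_k` and `(q^{-n};q)_{k+1} - (q^{-n-1};q)_{k+1} = q^{-n-1} (1 - q^{k+1}) (q^{-n};q)_k`,
and once `1 - q^{k+1}` cancels against `(q;q)_{k+1}`,
`T_n(u, v; k+1) - T_{n+1}(u, v; k+1) = q^{-n} (1 - u) (1 - v) T_n(qu, qv; k)`.
Summing over `k` (both sums start with the term `1`, and `T_n(u, v; n+1) = 0`) yields the relation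
between the three polynomials.
-/

open Complex Finset

/-- q-Pochhammer symbol `(a;q)_k = ∏_{j=0}^{k-1} (1 - a q^j)`. -/
noncomputable def qPoch (q a : ℂ) (k : ℕ) : ℂ := ∏ j ∈ Finset.range k, (1 - a * q ^ j)

/-- Continuous big q-Hermite polynomial `H_n(cos x; a | q)` as a function of `x ∈ ℂ`. -/
noncomputable def cbqHePoly (q a : ℂ) (n : ℕ) (x : ℂ) : ℂ :=
  a ^ (-(n : ℤ)) * ∑ k ∈ Finset.range (n + 1),
    qPoch q (q ^ (-(n : ℤ))) k * qPoch q (a * Complex.exp (Complex.I * x)) k *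
      qPoch q (a * Complex.exp (-(Complex.I * x))) k * q ^ k / qPoch q q k

lemma zpow_neg_natCast_succ {G₀ : Type*} [CommGroupWithZero G₀] (a : G₀) (n : ℕ) :
    a ^ (-((n + 1 : ℕ) : ℤ)) = a ^ (-(n : ℤ)) / a := by
  rw [zpow_neg, zpow_neg, zpow_natCast, zpow_natCast, pow_succ, mul_inv, div_eq_mul_inv]

lemma qPoch_zero (q b : ℂ) : qPoch q b 0 = 1 := by simp [qPoch]

lemma qPoch_succ (q b : ℂ) (k : ℕ) : qPoch q b (k + 1) = qPoch q b k * (1 - b * q ^ k) :=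
  prod_range_succ _ _

lemma qPoch_succ_eq_one_sub_mul (q b : ℂ) (k : ℕ) :
    qPoch q b (k + 1) = (1 - b) * qPoch q (q * b) k := by
  rw [qPoch, prod_range_succ', pow_zero, mul_one, mul_comm, qPoch]
  congr 1
  exact prod_congr rfl fun j _ => by ring

lemma qPoch_succ_sub_qPoch_div_succ {q : ℂ} (hq : q ≠ 0) (b : ℂ) (k : ℕ) :
    qPoch q b (k + 1) - qPoch q (b / q) (k + 1) = b / q * (1 - q ^ (k + 1)) * qPoch q b k := by
  rw [qPoch_succ, qPoch_succ_eq_one_sub_mul, mul_div_cancel₀ b hq]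
  field_simp
  ring

lemma qPoch_zpow_neg_eq_zero {q : ℂ} (hq : q ≠ 0) {n k : ℕ} (hnk : n < k) :
    qPoch q (q ^ (-(n : ℤ))) k = 0 :=
  prod_eq_zero (mem_range.mpr hnk) <| by
    rw [zpow_neg, zpow_natCast, inv_mul_cancel₀ (pow_ne_zero n hq), sub_self]

noncomputable def cbqHeTerm (q u v : ℂ) (n k : ℕ) : ℂ :=
  qPoch q (q ^ (-(n : ℤ))) k * qPoch q u k * qPoch q v k * q ^ k / qPoch q q k

noncomputable def cbqHeSum (q u v : ℂ) (n : ℕ) : ℂ :=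
  ∑ k ∈ range (n + 1), cbqHeTerm q u v n k

lemma cbqHePoly_eq_cbqHeSum (q a : ℂ) (n : ℕ) (x : ℂ) :
    cbqHePoly q a n x = a ^ (-(n : ℤ)) * cbqHeSum q (a * exp (I * x)) (a * exp (-(I * x))) n :=
  rfl

lemma cbqHeTerm_zero (q u v : ℂ) (n : ℕ) : cbqHeTerm q u v n 0 = 1 := by
  simp [cbqHeTerm, qPoch_zero]

lemma cbqHeTerm_succ_self {q : ℂ} (hq : q ≠ 0) (u v : ℂ) (n : ℕ) :
    cbqHeTerm q u v n (n + 1) = 0 := by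
  rw [cbqHeTerm, qPoch_zpow_neg_eq_zero hq n.lt_succ_self, zero_mul, zero_mul, zero_mul, zero_div]

lemma cbqHeTerm_succ_sub_succ {q : ℂ} (hq : q ≠ 0) (u v : ℂ) (n k : ℕ) (hk : q ^ (k + 1) ≠ 1) :
    cbqHeTerm q u v n (k + 1) - cbqHeTerm q u v (n + 1) (k + 1)
      = q ^ (-(n : ℤ)) * (1 - u) * (1 - v) * cbqHeTerm q (q * u) (q * v) n k := by
  have hk' : 1 - q ^ (k + 1) ≠ 0 := sub_ne_zero.mpr hk.symm
  simp only [cbqHeTerm, zpow_neg_natCast_succ, ← sub_div, ← sub_mul, qPoch_succ_sub_qPoch_div_succ hq]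
  rw [qPoch_succ_eq_one_sub_mul q u, qPoch_succ_eq_one_sub_mul q v, qPoch_succ q q k,
    ← pow_succ']
  field_simp
  ring

lemma cbqHeSum_sub_succ {q : ℂ} (hq : q ≠ 0) (u v : ℂ) (n : ℕ)
    (hqn : ∀ k ∈ range (n + 1), q ^ (k + 1) ≠ 1) :
    cbqHeSum q u v n - cbqHeSum q u v (n + 1)
      = q ^ (-(n : ℤ)) * (1 - u) * (1 - v) * cbqHeSum q (q * u) (q * v) n := by
  have extend : cbqHeSum q u v n = ∑ k ∈ range (n + 1 + 1), cbqHeTerm q u v n k := by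
    rw [sum_range_succ, cbqHeTerm_succ_self hq, add_zero, cbqHeSum]
  rw [extend, cbqHeSum, cbqHeSum, sum_range_succ' (cbqHeTerm q u v n),
    sum_range_succ' (cbqHeTerm q u v (n + 1)), cbqHeTerm_zero,
    cbqHeTerm_zero, add_sub_add_right_eq_sub, ← sum_sub_distrib, mul_sum]
  exact sum_congr rfl fun k hk => cbqHeTerm_succ_sub_succ hq u v n k (hqn k hk)

/-- The Christoffel relation (Theorem `thm:PhiPn` of the paper) for the continuous
big q-Hermite polynomials. -/
theorem continuous_big_q_hermite_christoffel
    (q : ℝ) (hq0 : 0 < q) (hq1 : q < 1)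
    (a : ℂ) (ha : a ≠ 0) (n : ℕ) (x : ℂ) :
    (1 - a * Complex.exp (Complex.I * x)) * (1 - a * Complex.exp (-(Complex.I * x))) *
      cbqHePoly (q : ℂ) ((q : ℂ) * a) n x
    = -a * cbqHePoly (q : ℂ) a (n + 1) x + cbqHePoly (q : ℂ) a n x := by
  have hq : (q : ℂ) ≠ 0 := ofReal_ne_zero.mpr hq0.ne'
  have hpow : ∀ k ∈ range (n + 1), (q : ℂ) ^ (k + 1) ≠ 1 := fun k _ => by
    exact_mod_cast (pow_lt_one₀ hq0.le hq1 k.succ_ne_zero).ne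
  have hsum := cbqHeSum_sub_succ hq (a * exp (I * x)) (a * exp (-(I * x))) n hpow
  rw [cbqHePoly_eq_cbqHeSum, cbqHePoly_eq_cbqHeSum, cbqHePoly_eq_cbqHeSum,
    mul_assoc (q : ℂ) a, mul_assoc (q : ℂ) a, mul_zpow, zpow_neg_natCast_succ,
    neg_mul, ← mul_assoc a, mul_div_cancel₀ _ ha]
  linear_combination -a ^ (-(n : ℤ)) * hsum
end
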